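/- arXiv:1810.04536 — 2 statements merged into one kernel-verified Lean document; each statement's English description precedes it below -/
import Mathlib

section
/- One-error-correcting decoding: let C be a binary [n,k]-code with minimum distance ≥ 3, G the standard-form reduced Groebner basis of its code ideal, and u ∈ F_2^n a word at Hamming distance ≤ 1 from some codeword. If the remainder of X^u − 1 by G has weight > 1, then there exists i with 1 ≤ i ≤ k such that the remainder of X^u − 1 equals the remainder of X^{e_i} − 1 (e_i the i-th standard basis vector), and u + e_i ∈ C is the codeword closest to u. -/
open MvPolynomial
open scoped MonomialOrder

/-- The leading (multidegree) exponent of a polynomial with respect to a monomial order. -/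
noncomputable def leadExp {σ K : Type*} [Field K] (m : MonomialOrder σ)
    (f : MvPolynomial σ K) : σ →₀ ℕ :=
  m.toSyn.symm (f.support.sup fun d => m.toSyn d)

/-- The leading term of a polynomial with respect to a monomial order. -/
noncomputable def leadTerm {σ K : Type*} [Field K] (m : MonomialOrder σ)
    (f : MvPolynomial σ K) : MvPolynomial σ K :=
  monomial (leadExp m f) (f.coeff (leadExp m f))

/-- `G` is a Groebner basis of the ideal `I` for the monomial order `m`. -/
def IsGroebnerBasis {σ K : Type*} [Field K] (m : MonomialOrder σ)
    (I : Ideal (MvPolynomial σ K)) (G : Set (MvPolynomial σ K)) : Prop :=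
  G.Finite ∧ G ⊆ (I : Set (MvPolynomial σ K)) ∧
    Ideal.span (leadTerm m '' G) = Ideal.span (leadTerm m '' {f | f ∈ I ∧ f ≠ 0})

/-- A reduced Groebner basis: all elements monic, and no monomial of an element lies in
the ideal generated by the leading terms of the other elements. -/
def IsReducedGB {σ K : Type*} [Field K] (m : MonomialOrder σ)
    (G : Set (MvPolynomial σ K)) : Prop :=
  ∀ p ∈ G, p.coeff (leadExp m p) = 1 ∧
    ∀ c ∈ p.support, (monomial c (1 : K)) ∉ Ideal.span (leadTerm m '' (G \ {p}))

/-- `r` is a remainder of `f` on division by `G` (relative to the ideal `I`):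
`f - r ∈ I` and no monomial of `r` is divisible by the leading monomial
of any nonzero element of `G`. -/
def IsRemainder {σ K : Type*} [Field K] (m : MonomialOrder σ)
    (I : Ideal (MvPolynomial σ K)) (G : Set (MvPolynomial σ K))
    (f r : MvPolynomial σ K) : Prop :=
  f - r ∈ I ∧ ∀ c ∈ r.support, ∀ g ∈ G, g ≠ 0 → ¬ leadExp m g ≤ c

/-- The exponent vector in `ℕ^n` associated with a binary word. -/
noncomputable def expOf {n : ℕ} (c : Fin n → ZMod 2) : Fin n →₀ ℕ :=
  Finsupp.equivFunOnFinite.symm fun i => (c i).val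

/-- The monomial `X^c` associated with a binary word `c`. -/
noncomputable def Xw (K : Type*) [Field K] {n : ℕ} (c : Fin n → ZMod 2) :
    MvPolynomial (Fin n) K :=
  monomial (expOf c) 1

/-- The code ideal `I_C = ⟨X^c − X^{c'} : c − c' ∈ C⟩ + ⟨X_i^2 − 1 : 1 ≤ i ≤ n⟩`. -/
noncomputable def codeIdeal (K : Type*) [Field K] {n : ℕ}
    (C : Submodule (ZMod 2) (Fin n → ZMod 2)) : Ideal (MvPolynomial (Fin n) K) :=
  Ideal.span ({f | ∃ c c' : Fin n → ZMod 2, c - c' ∈ C ∧ f = Xw K c - Xw K c'} ∪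
    {f | ∃ i : Fin n, f = X i ^ 2 - 1})

/-- `g` is a generating matrix in standard form `(I_k | M)` for the code `C`:
its rows span `C` and its first `k` columns form the identity matrix. -/
def IsStandardGenMatrix {n k : ℕ} (hk : k ≤ n) (C : Submodule (ZMod 2) (Fin n → ZMod 2))
    (g : Fin k → Fin n → ZMod 2) : Prop :=
  C = Submodule.span (ZMod 2) (Set.range g) ∧
    ∀ i j : Fin k, g i (Fin.castLE hk j) = if i = j then 1 else 0

/-- The word `m_i = (0,…,0, g_{i,k+1},…,g_{i,n})` built from the `i`-th row of `g`. -/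
def mrow {n k : ℕ} (g : Fin k → Fin n → ZMod 2) (i : Fin k) : Fin n → ZMod 2 :=
  fun j => if (j : ℕ) < k then 0 else g i j

/-- The set `{X_i − X^{m_i} : 1 ≤ i ≤ k} ∪ {X_j^2 − 1 : k+1 ≤ j ≤ n}`. -/
noncomputable def gbSet (K : Type*) [Field K] {n k : ℕ} (hk : k ≤ n)
    (g : Fin k → Fin n → ZMod 2) : Set (MvPolynomial (Fin n) K) :=
  (Set.range fun i : Fin k => X (Fin.castLE hk i) - Xw K (mrow g i)) ∪
    {f | ∃ j : Fin n, k ≤ (j : ℕ) ∧ f = X j ^ 2 - 1}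

/-!
Sending `X_i` to the class of the unit vector `e_i` in the group algebra of `F_2^n ⧸ C` kills
the code ideal, so `X^u - X^e ∈ I_C` forces `u - e ∈ C`. As `X^e - 1` is reduced with respect to
the leading monomials `X_i` (`i ≤ k`) of the basis, `e` vanishes on the information positions,
and by the standard form a codeword vanishing there is zero. Hence `u ∉ C`, so `u = c + e_j`
with `c ∈ C`, and `e_j - e ∈ C`. If `j > k`, then `e_j - e` vanishes on the information
positions, so `e = e_j` would have weight one. Thus `j ≤ k`, `X^{e_j} - 1` also reduces to
`X^e - 1`, and `u + e_j = c` is at distance one from `u`, which no codeword beats as `u ∉ C`.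
-/
section HammingWords

variable {ι : Type*} [Fintype ι] [DecidableEq ι]

theorem hammingNorm_pi_single {β : ι → Type*} [∀ i, Zero (β i)] [∀ i, DecidableEq (β i)]
    (i : ι) {b : β i} (hb : b ≠ 0) : hammingNorm (Pi.single i b) = 1 := by
  refine Finset.card_eq_one.2 ⟨i, Finset.ext fun j => ?_⟩
  rcases eq_or_ne j i with rfl | hj <;> simp [*]

theorem eq_zero_or_eq_single_of_hammingNorm_le_one {x : ι → ZMod 2} (hx : hammingNorm x ≤ 1) :
    x = 0 ∨ ∃ j, x = Pi.single j 1 := by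
  rcases Nat.le_one_iff_eq_zero_or_eq_one.1 hx with h0 | h1
  · exact Or.inl (hammingNorm_eq_zero.1 h0)
  obtain ⟨j, hj⟩ := Finset.card_eq_one.1 h1
  have hsupp : ∀ j', x j' ≠ 0 ↔ j' = j := by
    simpa using Finset.ext_iff.1 hj
  have hZMod2 : ∀ a : ZMod 2, a ≠ 0 → a = 1 := by decide
  refine Or.inr ⟨j, funext fun j' => ?_⟩
  rcases eq_or_ne j' j with rfl | hne
  · simpa using hZMod2 _ ((hsupp _).2 rfl)
  · simpa [hne] using mt (hsupp j').1 hne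

end HammingWords

section CodeIdeal

variable {K : Type*} [Field K] {n : ℕ} {C : Submodule (ZMod 2) (Fin n → ZMod 2)}

theorem sum_val_smul_pi_single (a : Fin n → ZMod 2) :
    ∑ i, (a i).val • (Pi.single i 1 : Fin n → ZMod 2) = a := by
  simp_rw [← Pi.single_smul, nsmul_eq_mul, mul_one, ZMod.natCast_zmod_val]
  exact Finset.univ_sum_single a

variable (K C) in
noncomputable def codeEval :
    MvPolynomial (Fin n) K →ₐ[K] AddMonoidAlgebra K ((Fin n → ZMod 2) ⧸ C) :=
  aeval fun i => AddMonoidAlgebra.single (Submodule.Quotient.mk (Pi.single i 1)) 1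

theorem codeEval_Xw (a : Fin n → ZMod 2) :
    codeEval K C (Xw K a) = AddMonoidAlgebra.single (Submodule.Quotient.mk a) 1 := by
  rw [Xw, codeEval, aeval_monomial, map_one, one_mul,
    Finsupp.prod_fintype _ _ (fun _ => pow_zero _)]
  simp only [AddMonoidAlgebra.single_pow, one_pow]
  rw [AddMonoidAlgebra.prod_single, Finset.prod_const_one]
  congr 1
  conv_rhs => rw [← sum_val_smul_pi_single a]
  simp only [← Submodule.mkQ_apply, map_sum, map_nsmul]
  rfl

theorem codeIdeal_le_ker_codeEval : codeIdeal K C ≤ RingHom.ker (codeEval K C) := by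
  rw [codeIdeal, Ideal.span_le]
  rintro f (⟨c, c', hcc, rfl⟩ | ⟨i, rfl⟩) <;> simp only [SetLike.mem_coe, RingHom.mem_ker,
    map_sub, map_pow, map_one, sub_eq_zero]
  · rw [codeEval_Xw, codeEval_Xw, (Submodule.Quotient.eq C).2 hcc]
  · have htwo : (2 : ℕ) • (Pi.single i 1 : Fin n → ZMod 2) = 0 := by
      rw [two_nsmul, ← Pi.single_add, show (1 + 1 : ZMod 2) = 0 from rfl, Pi.single_zero]
    rw [codeEval, aeval_X, AddMonoidAlgebra.single_pow, one_pow,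
      ← Submodule.Quotient.mk_smul, htwo, Submodule.Quotient.mk_zero, AddMonoidAlgebra.one_def]

theorem Xw_sub_Xw_mem_codeIdeal_iff {a b : Fin n → ZMod 2} :
    Xw K a - Xw K b ∈ codeIdeal K C ↔ a - b ∈ C := by
  refine ⟨fun h => ?_, fun h => Ideal.subset_span (Or.inl ⟨a, b, h, rfl⟩)⟩
  have hker := codeIdeal_le_ker_codeEval h
  rw [RingHom.mem_ker, map_sub, codeEval_Xw, codeEval_Xw, sub_eq_zero,
    AddMonoidAlgebra.single_left_inj one_ne_zero, Submodule.Quotient.eq] at hker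
  exact hker

end CodeIdeal

section StandardForm

variable {K : Type*} [Field K] {n k : ℕ} {hk : k ≤ n}
  {C : Submodule (ZMod 2) (Fin n → ZMod 2)} {g : Fin k → Fin n → ZMod 2}

theorem IsStandardGenMatrix.eq_sum_smul (hg : IsStandardGenMatrix hk C g)
    {x : Fin n → ZMod 2} (hx : x ∈ C) : x = ∑ i, x (Fin.castLE hk i) • g i := by
  rw [hg.1] at hx
  obtain ⟨c, rfl⟩ := (Submodule.mem_span_range_iff_exists_fun _).1 hx
  congr! with i
  simp [Finset.sum_apply, hg.2]

theorem IsStandardGenMatrix.eq_zero_of_forall_lt_eq_zero (hg : IsStandardGenMatrix hk C g)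
    {x : Fin n → ZMod 2} (hx : x ∈ C) (hx0 : ∀ j : Fin n, (j : ℕ) < k → x j = 0) :
    x = 0 := by
  have hinfo : ∀ i : Fin k, x (Fin.castLE hk i) = 0 := fun i => hx0 _ i.2
  rw [hg.eq_sum_smul hx]
  simp [hinfo]

theorem lex_lt_single_of_forall_le_eq_zero {σ : Type*} [LinearOrder σ] [WellFoundedGT σ]
    {d : σ →₀ ℕ} {a : σ} (hd : ∀ j ≤ a, d j = 0) :
    d ≺[MonomialOrder.lex] Finsupp.single a 1 := by
  rw [MonomialOrder.lex_lt_iff, Finsupp.Lex.lt_iff]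
  refine ⟨a, fun j hj => ?_, ?_⟩
  · simp [hd j hj.le, hj.ne]
  · simp [hd a le_rfl]

theorem lex_degree_X_sub_Xw_mrow (i : Fin k) :
    MonomialOrder.lex.degree (X (Fin.castLE hk i) - Xw K (mrow g i)) =
      Finsupp.single (Fin.castLE hk i) 1 := by
  classical
  have hmrow : ∀ j ≤ Fin.castLE hk i, expOf (mrow g i) j = 0 := fun j hj => by
    simp [expOf, mrow, (Fin.le_def.1 hj).trans_lt i.2]
  rw [MonomialOrder.degree_sub_of_lt, MonomialOrder.degree_X]
  rw [Xw, MonomialOrder.degree_monomial, if_neg one_ne_zero, MonomialOrder.degree_X]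
  exact lex_lt_single_of_forall_le_eq_zero hmrow

theorem expOf_mem_support_Xw_sub_one {e : Fin n → ZMod 2} (he : e ≠ 0) :
    expOf e ∈ (Xw K e - 1).support := by
  have hexp : expOf e ≠ 0 := fun h => he (funext fun i => by
    simpa [expOf] using DFunLike.congr_fun h i)
  simp [Xw, coeff_one, hexp.symm]

theorem IsRemainder.eq_zero_of_lt {I : Ideal (MvPolynomial (Fin n) K)}
    {f : MvPolynomial (Fin n) K} {e : Fin n → ZMod 2}
    (hr : IsRemainder MonomialOrder.lex I (gbSet K hk g) f (Xw K e - 1)) (he : e ≠ 0)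
    {j : Fin n} (hj : (j : ℕ) < k) : e j = 0 := by
  obtain ⟨i, rfl⟩ : ∃ i : Fin k, Fin.castLE hk i = j := ⟨⟨j, hj⟩, rfl⟩
  have hdeg := lex_degree_X_sub_Xw_mrow (K := K) (hk := hk) (g := g) i
  have hrow : X (Fin.castLE hk i) - Xw K (mrow g i) ≠ 0 := fun h => by
    simp [h, eq_comm] at hdeg
  have hndvd := hr.2 _ (expOf_mem_support_Xw_sub_one he) _ (Or.inl ⟨i, rfl⟩) hrow
  rw [leadExp, ← MonomialOrder.degree, hdeg, Finsupp.single_le_iff] at hndvd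
  simpa [expOf] using hndvd

theorem IsStandardGenMatrix.eq_zero_of_isRemainder (hg : IsStandardGenMatrix hk C g)
    {I : Ideal (MvPolynomial (Fin n) K)} {f : MvPolynomial (Fin n) K} {e : Fin n → ZMod 2}
    (hr : IsRemainder MonomialOrder.lex I (gbSet K hk g) f (Xw K e - 1)) (he : e ∈ C) :
    e = 0 := by
  by_contra he0
  exact he0 (hg.eq_zero_of_forall_lt_eq_zero he fun _ => hr.eq_zero_of_lt he0)

theorem IsStandardGenMatrix.lt_of_single_sub_mem (hg : IsStandardGenMatrix hk C g)
    {I : Ideal (MvPolynomial (Fin n) K)} {f : MvPolynomial (Fin n) K} {e : Fin n → ZMod 2}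
    (hr : IsRemainder MonomialOrder.lex I (gbSet K hk g) f (Xw K e - 1))
    (hw : 1 < hammingNorm e) {j : Fin n} (hj : Pi.single j 1 - e ∈ C) : (j : ℕ) < k := by
  have he : e ≠ 0 := hammingNorm_pos_iff.1 (zero_lt_one.trans hw)
  by_contra hjk
  have hej : Pi.single j 1 - e = 0 := hg.eq_zero_of_forall_lt_eq_zero hj fun j' hj' => by
    have hne : j' ≠ j := fun h => hjk (h ▸ hj')
    simp [hne, hr.eq_zero_of_lt he hj']
  rw [← sub_eq_zero.1 hej, hammingNorm_pi_single j one_ne_zero] at hw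
  exact lt_irrefl _ hw

end StandardForm

theorem one_error_decoding_general (K : Type*) [Field K] {n k : ℕ} (hk : k ≤ n)
    (C : Submodule (ZMod 2) (Fin n → ZMod 2)) (g : Fin k → Fin n → ZMod 2)
    (hg : IsStandardGenMatrix hk C g)
    (u : Fin n → ZMod 2) (hu : ∃ c ∈ C, hammingDist u c ≤ 1)
    (e : Fin n → ZMod 2)
    (hrem : IsRemainder MonomialOrder.lex (codeIdeal K C) (gbSet K hk g)
      (Xw K u - 1) (Xw K e - 1))
    (hw : 1 < hammingNorm e) :
    ∃ i : Fin k,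
      IsRemainder MonomialOrder.lex (codeIdeal K C) (gbSet K hk g)
        (Xw K (fun j => if j = Fin.castLE hk i then 1 else 0) - 1) (Xw K e - 1) ∧
      (u + fun j => if j = Fin.castLE hk i then 1 else 0) ∈ C ∧
      ∀ c' ∈ C, hammingDist u (u + fun j => if j = Fin.castLE hk i then 1 else 0)
        ≤ hammingDist u c' := by
  obtain ⟨c, hc, hdist⟩ := hu
  have he : e ≠ 0 := hammingNorm_pos_iff.1 (zero_lt_one.trans hw)
  have hue : u - e ∈ C := Xw_sub_Xw_mem_codeIdeal_iff.1 (by simpa using hrem.1)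
  have hu : u ∉ C := fun hu =>
    he <| hg.eq_zero_of_isRemainder hrem (by simpa using C.sub_mem hu hue)
  have herr : hammingNorm (u - c) ≤ 1 := by
    rwa [← neg_add_eq_sub, ← hammingDist_eq_hammingNorm, hammingDist_comm]
  obtain ⟨j, hj⟩ : ∃ j, u - c = Pi.single j 1 :=
    (eq_zero_or_eq_single_of_hammingNorm_le_one herr).resolve_left
      fun h => hu (sub_eq_zero.1 h ▸ hc)
  have hjC : Pi.single j 1 - e ∈ C := by
    rw [← hj, sub_right_comm]
    exact C.sub_mem hue hc
  have hjk : (j : ℕ) < k := hg.lt_of_single_sub_mem hrem hw hjC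
  refine ⟨⟨j, hjk⟩, ?_⟩
  have hunit : (fun j' => if j' = Fin.castLE hk ⟨j, hjk⟩ then (1 : ZMod 2) else 0) =
      Pi.single j 1 := funext fun j' => (Pi.single_apply j 1 j').symm
  have hcorr : u + Pi.single j 1 = c := by
    have hZMod2 : ∀ a b : ZMod 2, a + (a - b) = b := by decide
    rw [← hj]
    exact funext fun i => hZMod2 (u i) (c i)
  rw [hunit, hcorr]
  refine ⟨⟨?_, hrem.2⟩, hc, fun c' hc' => hdist.trans ?_⟩
  · rwa [sub_sub_sub_cancel_right, Xw_sub_Xw_mem_codeIdeal_iff]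
  · exact hammingDist_pos.2 fun h => hu (h ▸ hc')

/-- one-error-correcting decoding. Let `C` be a binary `[n,k]` code of
minimum distance `≥ 3` with standard-form reduced Groebner basis, and `u` a word at
distance `≤ 1` from some codeword. If the remainder `X^e − 1` of `X^u − 1` on division
by the basis has weight `> 1`, then there is `i ≤ k` such that `X^{e_i} − 1` has the same
remainder, and `u + e_i ∈ C` is the codeword closest to `u`. -/
theorem one_error_decoding (K : Type*) [Field K] {n k : ℕ} (hk : k ≤ n)
    (C : Submodule (ZMod 2) (Fin n → ZMod 2)) (g : Fin k → Fin n → ZMod 2)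
    (hg : IsStandardGenMatrix hk C g)
    (hd : ∀ x ∈ C, x ≠ 0 → 3 ≤ hammingNorm x)
    (u : Fin n → ZMod 2) (hu : ∃ c ∈ C, hammingDist u c ≤ 1)
    (e : Fin n → ZMod 2)
    (hrem : IsRemainder MonomialOrder.lex (codeIdeal K C) (gbSet K hk g)
      (Xw K u - 1) (Xw K e - 1))
    (hw : 1 < hammingNorm e) :
    ∃ i : Fin k,
      IsRemainder MonomialOrder.lex (codeIdeal K C) (gbSet K hk g)
        (Xw K (fun j => if j = Fin.castLE hk i then 1 else 0) - 1) (Xw K e - 1) ∧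
      (u + fun j => if j = Fin.castLE hk i then 1 else 0) ∈ C ∧
      ∀ c' ∈ C, hammingDist u (u + fun j => if j = Fin.castLE hk i then 1 else 0)
        ≤ hammingDist u c' :=
  one_error_decoding_general K hk C g hg u hu e hrem hw
end

section
/- For the [7,4] binary code with generator matrix rows (1,0,0,0,1,1,1), (0,1,0,0,0,1,1), (0,0,1,0,1,0,1), (0,0,0,1,1,1,0), the set {X_1 − X_5X_6X_7, X_2 − X_6X_7, X_3 − X_5X_7, X_4 − X_5X_6, X_5^2 − 1, X_6^2 − 1, X_7^2 − 1} is a Groebner basis of the code ideal I_C with respect to lex order X_1 > ... > X_7. -/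
open MvPolynomial
open scoped MonomialOrder

/-- The `[7,4]` binary Hamming code, spanned by the rows of its standard-form
generator matrix. -/
noncomputable def hammingC : Submodule (ZMod 2) (Fin 7 → ZMod 2) :=
  Submodule.span (ZMod 2)
    {![1,0,0,0,1,1,1], ![0,1,0,0,0,1,1], ![0,0,1,0,1,0,1], ![0,0,0,1,1,1,0]}

/-- The Groebner basis from the example (variables `X_1,…,X_7` are `X 0,…,X 6`). -/
noncomputable def hammingGB (K : Type*) [Field K] : Set (MvPolynomial (Fin 7) K) :=
  { X 0 - X 4 * X 5 * X 6, X 1 - X 5 * X 6, X 2 - X 4 * X 6, X 3 - X 4 * X 5,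
    X 4 ^ 2 - 1, X 5 ^ 2 - 1, X 6 ^ 2 - 1 }

/-!
The algebra map `X^d ↦ [d mod 2]` from `K[X₁,…,Xₙ]` to the group algebra of `F₂ⁿ ⧸ C` kills the
code ideal. Every element of the proposed basis is a binomial `X^a - X^b` with `b < a` whose two
exponents have the same class, so every exponent can be rewritten, without increasing it, into a
standard one (divisible by no leading exponent `a`) of the same class. For a generator matrix in
standard form the standard exponents are the `0/1` vectors supported on the last `n - k`
coordinates, and distinct ones have distinct classes since no nonzero codeword vanishes on the
first `k` coordinates. Hence a standard exponent is the least one in its class. If the leading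
exponent of a nonzero `f ∈ I_C` were standard, the coefficient of its class in the image of `f`
would be the leading coefficient of `f` alone, which is nonzero; so it is divisible by the
leading exponent of a basis element.
-/

open MonomialOrder

section BinomialCriterion

variable {σ R A ι : Type*} [AddCommMonoid A]

def IsStandardExp (a : ι → σ →₀ ℕ) (s : σ →₀ ℕ) : Prop := ∀ i, ¬ a i ≤ s

section CommSemiring

variable [CommSemiring R]

variable (R) in
noncomputable def weightHom (w : (σ →₀ ℕ) →+ A) : MvPolynomial σ R →ₐ[R] AddMonoidAlgebra R A :=
  AddMonoidAlgebra.mapDomainAlgHom R R w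

theorem weightHom_monomial (w : (σ →₀ ℕ) →+ A) (d : σ →₀ ℕ) (c : R) :
    weightHom R w (monomial d c) = AddMonoidAlgebra.single (w d) c :=
  AddMonoidAlgebra.mapDomain_single

theorem coeff_weightHom [DecidableEq A] (w : (σ →₀ ℕ) →+ A) (f : MvPolynomial σ R) (x : A) :
    (weightHom R w f).coeff x = ∑ d ∈ f.support with w d = x, f.coeff d := by
  conv_lhs => rw [f.as_sum]
  simp only [map_sum, weightHom_monomial, AddMonoidAlgebra.coeff_sum, Finsupp.finsetSum_apply,
    AddMonoidAlgebra.coeff_single, Finsupp.single_apply, Finset.sum_filter]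

variable {m : MonomialOrder σ} {a b : ι → σ →₀ ℕ} {w : (σ →₀ ℕ) →+ A}

theorem exists_isStandardExp_weight_eq (hlt : ∀ i, b i ≺[m] a i) (hw : ∀ i, w (a i) = w (b i))
    (d : σ →₀ ℕ) : ∃ s, IsStandardExp a s ∧ s ≼[m] d ∧ w s = w d := by
  induction d using (InvImage.wf (fun d => m.toSyn d) wellFounded_lt).induction with
  | _ d ih =>
  by_cases hd : IsStandardExp a d
  · exact ⟨d, hd, le_rfl, rfl⟩
  obtain ⟨i, hi⟩ : ∃ i, a i ≤ d := by simpa [IsStandardExp] using hd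
  have hd' : d - a i + a i = d := tsub_add_cancel_of_le hi
  have hlt' : d - a i + b i ≺[m] d := by
    conv_rhs => rw [← hd']
    simpa only [map_add] using add_lt_add_right (hlt i) _
  obtain ⟨s, hs, hsle, hsw⟩ := ih _ hlt'
  refine ⟨s, hs, hsle.trans hlt'.le, ?_⟩
  rw [hsw, map_add, ← hw, ← map_add, hd']

theorem toSyn_le_of_weight_eq (hlt : ∀ i, b i ≺[m] a i) (hw : ∀ i, w (a i) = w (b i))
    (hinj : Set.InjOn w {s | IsStandardExp a s}) {s d : σ →₀ ℕ} (hs : IsStandardExp a s)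
    (hd : w d = w s) : s ≼[m] d := by
  obtain ⟨t, ht, htd, htw⟩ := exists_isStandardExp_weight_eq hlt hw d
  rwa [hinj hs ht (htw.trans hd).symm]

theorem exists_le_degree_of_mem_ker (hlt : ∀ i, b i ≺[m] a i) (hw : ∀ i, w (a i) = w (b i))
    (hinj : Set.InjOn w {s | IsStandardExp a s}) {f : MvPolynomial σ R}
    (hf : f ∈ RingHom.ker (weightHom R w)) (hf0 : f ≠ 0) : ∃ i, a i ≤ m.degree f := by
  classical
  by_contra! hstd
  have hD : m.degree f ∈ f.support := m.degree_mem_support hf0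
  have hcoeff : (weightHom R w f).coeff (w (m.degree f)) = f.coeff (m.degree f) := by
    rw [coeff_weightHom]
    refine Finset.sum_eq_single_of_mem _ (Finset.mem_filter.mpr ⟨hD, rfl⟩) fun d hd hne => ?_
    obtain ⟨hd, hwd⟩ := Finset.mem_filter.mp hd
    refine absurd (m.toSyn.injective (le_antisymm (m.le_degree hd) ?_)) hne
    exact toSyn_le_of_weight_eq hlt hw hinj hstd hwd
  rw [RingHom.mem_ker.mp hf] at hcoeff
  exact (mem_support_iff.mp hD) hcoeff.symm

end CommSemiring

section CommRing

variable [CommRing R] [Nontrivial R]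

theorem monomial_sub_monomial_mem_ker_iff {w : (σ →₀ ℕ) →+ A} {a b : σ →₀ ℕ} :
    monomial a (1 : R) - monomial b 1 ∈ RingHom.ker (weightHom R w) ↔ w a = w b := by
  rw [RingHom.mem_ker, map_sub, weightHom_monomial, weightHom_monomial, sub_eq_zero]
  exact AddMonoidAlgebra.single_left_inj one_ne_zero

theorem leadingTerm_monomial_sub_monomial {m : MonomialOrder σ} {a b : σ →₀ ℕ}
    (h : b ≺[m] a) : m.leadingTerm (monomial a (1 : R) - monomial b 1) = monomial a 1 := by
  classical
  have hdeg : m.degree (monomial b (1 : R)) ≺[m] m.degree (monomial a (1 : R)) := by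
    simpa [degree_monomial] using h
  rw [leadingTerm, degree_sub_of_lt hdeg, leadingCoeff_sub_of_lt hdeg, leadingCoeff_monomial,
    degree_monomial, if_neg one_ne_zero]

end CommRing

variable {K : Type*} [Field K]

theorem leadTerm_eq_leadingTerm (m : MonomialOrder σ) : leadTerm m = m.leadingTerm (R := K) :=
  rfl

theorem isGroebnerBasis_range_monomial_sub_monomial [Finite ι] {m : MonomialOrder σ}
    {a b : ι → σ →₀ ℕ} {w : (σ →₀ ℕ) →+ A} {I : Ideal (MvPolynomial σ K)}
    (hker : I ≤ RingHom.ker (weightHom K w))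
    (hmem : ∀ i, monomial (a i) (1 : K) - monomial (b i) 1 ∈ I)
    (hlt : ∀ i, b i ≺[m] a i) (hinj : Set.InjOn w {s | IsStandardExp a s}) :
    IsGroebnerBasis m I (Set.range fun i => monomial (a i) (1 : K) - monomial (b i) 1) := by
  have hw i : w (a i) = w (b i) := monomial_sub_monomial_mem_ker_iff.mp (hker (hmem i))
  refine ⟨Set.finite_range _, Set.range_subset_iff.mpr hmem, le_antisymm ?_ ?_⟩
  · refine Ideal.span_mono (Set.image_mono ?_)
    rintro _ ⟨i, rfl⟩
    refine ⟨hmem i, sub_ne_zero.mpr fun h => (hlt i).ne' ?_⟩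
    rw [(monomial_left_inj one_ne_zero).mp h]
  · rw [Ideal.span_le, leadTerm_eq_leadingTerm]
    rintro _ ⟨f, ⟨hf, hf0⟩, rfl⟩
    obtain ⟨i, hi⟩ := exists_le_degree_of_mem_ker hlt hw hinj (hker hf) hf0
    have hdvd : m.leadingTerm f = monomial (m.degree f - a i) (m.leadingCoeff f) *
        m.leadingTerm (monomial (a i) (1 : K) - monomial (b i) 1) := by
      rw [leadingTerm_monomial_sub_monomial (hlt i), monomial_mul, tsub_add_cancel_of_le hi,
        mul_one, leadingTerm]
    rw [hdvd]
    exact Ideal.mul_mem_left _ _ (Ideal.subset_span ⟨_, ⟨i, rfl⟩, rfl⟩)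

end BinomialCriterion

section CodeIdeal

variable {K : Type*} [Field K] {n : ℕ}

theorem expOf_single (p : Fin n) : expOf (Pi.single p 1) = Finsupp.single p 1 := by
  ext j
  rcases eq_or_ne j p with rfl | h
  · simp [expOf, ZMod.val_one]
  · simp [expOf, h]

theorem Xw_eq_prod (c : Fin n → ZMod 2) : Xw K c = ∏ j, X j ^ (c j).val := by
  rw [Xw, monomial_eq, C_1, one_mul, Finsupp.prod_fintype _ _ fun _ => pow_zero _]
  rfl

variable (C : Submodule (ZMod 2) (Fin n → ZMod 2))

/-- `F₂ⁿ ⧸ C` stands in for the syndrome space of a parity-check matrix of `C`. -/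
noncomputable def syndrome : (Fin n →₀ ℕ) →+ (Fin n → ZMod 2) ⧸ C :=
  AddMonoidHom.mk' (fun d => C.mkQ fun j => (d j : ZMod 2)) fun d e => by
    rw [← map_add]; congr 1; funext j; simp

theorem syndrome_expOf (c : Fin n → ZMod 2) : syndrome C (expOf c) = C.mkQ c := by
  simp [syndrome, expOf]

theorem syndrome_single_two (i : Fin n) : syndrome C (Finsupp.single i 2) = 0 := by
  have h : (fun j => ((Finsupp.single i 2 : Fin n →₀ ℕ) j : ZMod 2)) = 0 := by
    funext j
    rw [Finsupp.single_apply]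
    split_ifs <;> rfl
  simp only [syndrome, AddMonoidHom.mk'_apply, h, map_zero]

theorem codeIdeal_le_ker_weightHom : codeIdeal K C ≤ RingHom.ker (weightHom K (syndrome C)) := by
  refine Ideal.span_le.mpr ?_
  rintro _ (⟨c, c', hc, rfl⟩ | ⟨i, rfl⟩)
  · refine monomial_sub_monomial_mem_ker_iff.mpr ?_
    rw [syndrome_expOf, syndrome_expOf]
    exact (Submodule.Quotient.eq C).mpr hc
  · rw [X_pow_eq_monomial, one_def]
    refine monomial_sub_monomial_mem_ker_iff.mpr ?_
    rw [syndrome_single_two, map_zero]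

end CodeIdeal

section StandardForm

variable {n k : ℕ} {hk : k ≤ n} {C : Submodule (ZMod 2) (Fin n → ZMod 2)}
  {g : Fin k → Fin n → ZMod 2}

theorem IsStandardGenMatrix.eq_zero_of_mem (hg : IsStandardGenMatrix hk C g)
    {x : Fin n → ZMod 2} (hx : x ∈ C) (h0 : ∀ j : Fin k, x (Fin.castLE hk j) = 0) :
    x = 0 := by
  rw [hg.1] at hx
  obtain ⟨c, rfl⟩ := (Submodule.mem_span_range_iff_exists_fun _).mp hx
  have hc : c = 0 := funext fun j => by simpa [Finset.sum_apply, hg.2] using h0 j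
  simp [hc]

theorem IsStandardGenMatrix.single_sub_mrow (hg : IsStandardGenMatrix hk C g) (i : Fin k) :
    Pi.single (Fin.castLE hk i) 1 - mrow g i = g i := by
  funext j
  by_cases hj : (j : ℕ) < k
  · obtain ⟨j, rfl⟩ : ∃ j' : Fin k, Fin.castLE hk j' = j := ⟨⟨j, hj⟩, rfl⟩
    simp [mrow, hg.2, Pi.single_apply, eq_comm]
  · have hij : j ≠ Fin.castLE hk i := fun h => hj (h ▸ i.isLt)
    simp [mrow, hj, hij, ZMod.neg_eq_self_mod_two]

end StandardForm

section GbSet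

variable {K : Type*} [Field K] {n k : ℕ} (hk : k ≤ n) (g : Fin k → Fin n → ZMod 2)

noncomputable def gbLead : Fin k ⊕ {j : Fin n // k ≤ (j : ℕ)} → Fin n →₀ ℕ
  | .inl i => Finsupp.single (Fin.castLE hk i) 1
  | .inr j => Finsupp.single j 2

noncomputable def gbTail : Fin k ⊕ {j : Fin n // k ≤ (j : ℕ)} → Fin n →₀ ℕ
  | .inl i => expOf (mrow g i)
  | .inr _ => 0

theorem gbSet_eq_range : gbSet K hk g =
    Set.range fun x => monomial (gbLead hk x) (1 : K) - monomial (gbTail g x) 1 := by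
  ext f
  simp only [gbSet, Set.mem_union, Set.mem_range, Set.mem_ofPred_eq, Sum.exists, Subtype.exists,
    gbLead, gbTail, X_pow_eq_monomial, one_def, exists_prop, eq_comm]
  rfl

theorem gbTail_lt_gbLead (x : Fin k ⊕ {j : Fin n // k ≤ (j : ℕ)}) :
    gbTail g x ≺[MonomialOrder.lex] gbLead hk x := by
  rcases x with i | j
  · rw [lex_lt_iff, Finsupp.Lex.lt_iff]
    refine ⟨Fin.castLE hk i, fun j hj => ?_, ?_⟩
    · have hjk : (j : ℕ) < k := lt_trans hj i.isLt
      simp [gbTail, gbLead, expOf, mrow, hjk, hj.ne]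
    · simp [gbTail, gbLead, expOf, mrow]
  · simp [gbTail, gbLead, toSyn_lt_iff_ne_zero]

variable {hk} in
theorem IsStandardExp.of_gbLead {s : Fin n →₀ ℕ} (hs : IsStandardExp (gbLead hk) s) :
    (∀ i : Fin k, s (Fin.castLE hk i) = 0) ∧ ∀ j : Fin n, k ≤ (j : ℕ) → s j ≤ 1 := by
  constructor
  · intro i
    simpa [gbLead, Finsupp.single_le_iff] using hs (.inl i)
  · intro j hj
    have := hs (.inr ⟨j, hj⟩)
    simp only [gbLead, Finsupp.single_le_iff, not_le] at this
    omega

variable {C : Submodule (ZMod 2) (Fin n → ZMod 2)} {hk g}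

theorem IsStandardGenMatrix.injOn_syndrome (hg : IsStandardGenMatrix hk C g) :
    Set.InjOn (syndrome C) {s | IsStandardExp (gbLead hk) s} := by
  intro s hs t ht hst
  obtain ⟨hs0, hs1⟩ := IsStandardExp.of_gbLead hs
  obtain ⟨ht0, ht1⟩ := IsStandardExp.of_gbLead ht
  have hdiff : (fun j => (s j : ZMod 2)) - (fun j => (t j : ZMod 2)) = 0 :=
    hg.eq_zero_of_mem ((Submodule.Quotient.eq C).mp hst) fun j => by simp [hs0 j, ht0 j]
  ext j
  by_cases hj : (j : ℕ) < k
  · exact (hs0 ⟨j, hj⟩).trans (ht0 ⟨j, hj⟩).symm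
  · have hmod := (ZMod.natCast_eq_natCast_iff' _ _ 2).mp (sub_eq_zero.mp (congrFun hdiff j))
    have := hs1 j (not_lt.mp hj)
    have := ht1 j (not_lt.mp hj)
    omega

theorem IsStandardGenMatrix.monomial_sub_monomial_mem_codeIdeal (hg : IsStandardGenMatrix hk C g)
    (x : Fin k ⊕ {j : Fin n // k ≤ (j : ℕ)}) :
    monomial (gbLead hk x) (1 : K) - monomial (gbTail g x) 1 ∈ codeIdeal K C := by
  refine Ideal.subset_span ?_
  rcases x with i | j
  · refine Or.inl ⟨Pi.single (Fin.castLE hk i) 1, mrow g i, ?_,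
      by simp [gbLead, gbTail, Xw, expOf_single]⟩
    rw [hg.single_sub_mrow, hg.1]
    exact Submodule.subset_span ⟨i, rfl⟩
  · exact Or.inr ⟨j, by rw [X_pow_eq_monomial, one_def]; rfl⟩

theorem IsStandardGenMatrix.isGroebnerBasis_gbSet (hg : IsStandardGenMatrix hk C g) :
    IsGroebnerBasis MonomialOrder.lex (codeIdeal K C) (gbSet K hk g) := by
  rw [gbSet_eq_range]
  exact isGroebnerBasis_range_monomial_sub_monomial (codeIdeal_le_ker_weightHom C)
    hg.monomial_sub_monomial_mem_codeIdeal (gbTail_lt_gbLead hk g) hg.injOn_syndrome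

end GbSet

def hammingGenMatrix : Fin 4 → Fin 7 → ZMod 2 :=
  ![![1,0,0,0,1,1,1], ![0,1,0,0,0,1,1], ![0,0,1,0,1,0,1], ![0,0,0,1,1,1,0]]

theorem isStandardGenMatrix_hamming :
    IsStandardGenMatrix (by norm_num) hammingC hammingGenMatrix := by
  refine ⟨?_, by decide⟩
  rw [hammingC, hammingGenMatrix]
  simp only [Matrix.range_cons, Matrix.range_empty, Set.union_empty, Set.singleton_union]

theorem hammingGB_eq_gbSet (K : Type*) [Field K] :
    hammingGB K = gbSet K (by norm_num) hammingGenMatrix := by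
  have hval : (1 : ZMod 2).val = 1 := rfl
  ext f
  simp [gbSet, hammingGB, Fin.exists_fin_succ, Xw_eq_prod, Fin.prod_univ_seven, mrow,
    hammingGenMatrix, hval, eq_comm, or_assoc]

/-- the displayed set is a Groebner basis of the code ideal of the
`[7,4]` Hamming code with respect to the lexicographic order `X_1 > ⋯ > X_7`. -/
theorem hamming_groebner_basis (K : Type*) [Field K] :
    IsGroebnerBasis MonomialOrder.lex (codeIdeal K hammingC) (hammingGB K) := by
  rw [hammingGB_eq_gbSet]
  exact isStandardGenMatrix_hamming.isGroebnerBasis_gbSet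
end
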